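/- For 0 < α < 1, 0 < p < 1, q = 1−p, the cdf of the distribution with density Λ_{α,p}(x) = pq sin(απ) x^{α−1}(1−x)^{α−1} / (π[q²x^{2α} + p²(1−x)^{2α} + 2pq x^α(1−x)^α cos(απ)]) is F(y) = 1 − (1/(πα)) arccot( cot(πα) + (q y^α)/(p(1−y)^α sin(πα)) ) for 0 < y < 1. -/

import Mathlib

/-!
The claimed distribution function `F` vanishes at `0` because `arccot (cot (π α)) = π α`, and
`F' = Λ` on `(0, 1)`: writing `u = cot θ + q r / (p sin θ)` with `θ = π α` and
`r x = x^α / (1 - x)^α`, one has `r' x = α x^(α-1) (1 - x)^(α-1) / (1 - x)^(2α)` and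
`1 + u² = D / (p (1 - x)^α sin θ)²`, where `D` is the denominator of `Λ`. Since `D` is a sum of
two squares, `Λ ≥ 0`, so `Λ` is integrable on `(0, y)` and the fundamental theorem of calculus
gives `∫₀^y Λ = F y - F 0 = F y`.
-/

open Real MeasureTheory Set

/-- Inverse cotangent with values in `(0, π)`. -/
noncomputable def arccot (x : ℝ) : ℝ := π / 2 - Real.arctan x

theorem arccot_cot {θ : ℝ} (h0 : 0 < θ) (hπ : θ < π) : arccot (cot θ) = θ := by
  have hcot : cot θ = tan (π / 2 - θ) := by
    rw [tan_pi_div_two_sub, cot_eq_cos_div_sin, tan_eq_sin_div_cos, inv_div]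
  rw [arccot, hcot, arctan_tan (by linarith) (by linarith)]
  ring

theorem hasDerivAt_arccot (x : ℝ) : HasDerivAt arccot (-(1 + x ^ 2)⁻¹) x :=
  (hasDerivAt_arctan' x).const_sub (π / 2)

theorem rpow_two_mul {x : ℝ} (hx : 0 ≤ x) (a : ℝ) : x ^ (2 * a) = (x ^ a) ^ 2 := by
  rw [mul_comm, ← rpow_mul_natCast hx, Nat.cast_ofNat]

theorem sq_add_sq_add_two_mul_mul_cos (a b θ : ℝ) :
    a ^ 2 + b ^ 2 + 2 * a * b * cos θ = (b * sin θ) ^ 2 + (a + b * cos θ) ^ 2 := by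
  linear_combination (-b ^ 2) * sin_sq_add_cos_sq θ

theorem integral_Ioo_eq_sub_of_hasDerivAt_of_nonneg {f f' : ℝ → ℝ} {a b : ℝ} (hab : a ≤ b)
    (hcont : ContinuousOn f (Icc a b)) (hderiv : ∀ x ∈ Ioo a b, HasDerivAt f (f' x) x)
    (hpos : ∀ x ∈ Ioo a b, 0 ≤ f' x) : ∫ x in Ioo a b, f' x = f b - f a := by
  rw [← integral_Ioc_eq_integral_Ioo, ← intervalIntegral.integral_of_le hab]
  exact intervalIntegral.integral_eq_sub_of_hasDerivAt_of_le hab hcont hderiv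
    ((intervalIntegrable_iff_integrableOn_Ioc_of_le hab).2
      (intervalIntegral.integrableOn_deriv_of_nonneg hcont hderiv hpos))

theorem hasDerivAt_rpow_div_one_sub_rpow {α x : ℝ} (hx0 : 0 < x) (hx1 : x < 1) :
    HasDerivAt (fun t => t ^ α / (1 - t) ^ α)
      (α * x ^ (α - 1) * (1 - x) ^ (α - 1) / ((1 - x) ^ α) ^ 2) x := by
  have h1x : 0 < 1 - x := sub_pos.2 hx1
  have hnum := hasDerivAt_rpow_const (p := α) (Or.inl hx0.ne')
  have hden := ((hasDerivAt_id x).const_sub 1).rpow_const (p := α) (Or.inl h1x.ne')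
  refine (hnum.div hden (rpow_pos_of_pos h1x α).ne').congr_deriv ?_
  simp only [id_eq]
  rw [rpow_sub_one hx0.ne', rpow_sub_one h1x.ne']
  field_simp
  ring

noncomputable def lampertiDensity (α p q x : ℝ) : ℝ :=
  p * q * sin (α * π) * x ^ (α - 1) * (1 - x) ^ (α - 1) /
    (π * (q ^ 2 * x ^ (2 * α) + p ^ 2 * (1 - x) ^ (2 * α)
      + 2 * p * q * x ^ α * (1 - x) ^ α * cos (α * π)))

noncomputable def lampertiCDF (α p q y : ℝ) : ℝ :=
  1 - (1 / (π * α)) * arccot (cot (π * α) + q * y ^ α / (p * (1 - y) ^ α * sin (π * α)))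

section Lamperti

variable {α p q x : ℝ}

theorem lampertiDenominator_eq_sum_sq (hx0 : 0 ≤ x) (hx1 : x ≤ 1) :
    q ^ 2 * x ^ (2 * α) + p ^ 2 * (1 - x) ^ (2 * α)
      + 2 * p * q * x ^ α * (1 - x) ^ α * cos (α * π)
      = (p * (1 - x) ^ α * sin (α * π)) ^ 2 + (q * x ^ α + p * (1 - x) ^ α * cos (α * π)) ^ 2 := by
  rw [rpow_two_mul hx0, rpow_two_mul (sub_nonneg.2 hx1)]
  linear_combination sq_add_sq_add_two_mul_mul_cos (q * x ^ α) (p * (1 - x) ^ α) (α * π)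

theorem lampertiDensity_nonneg (hp : 0 ≤ p) (hq : 0 ≤ q) (hs : 0 ≤ sin (α * π))
    (hx0 : 0 ≤ x) (hx1 : x ≤ 1) : 0 ≤ lampertiDensity α p q x := by
  have h1x := sub_nonneg.2 hx1
  rw [lampertiDensity, lampertiDenominator_eq_sum_sq hx0 hx1]
  positivity

theorem lampertiCDF_zero (hα0 : 0 < α) (hα1 : α < 1) : lampertiCDF α p q 0 = 0 := by
  rw [lampertiCDF, zero_rpow hα0.ne', mul_zero, zero_div, add_zero,
    arccot_cot (by positivity) (by nlinarith [pi_pos])]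
  field_simp
  ring

theorem continuousOn_lampertiCDF (hα : 0 ≤ α) (hp : p ≠ 0) (hs : sin (π * α) ≠ 0) :
    ContinuousOn (lampertiCDF α p q) (Iio 1) := by
  have hden : ∀ x ∈ Iio (1 : ℝ), p * (1 - x) ^ α * sin (π * α) ≠ 0 := fun x hx =>
    mul_ne_zero (mul_ne_zero hp (rpow_pos_of_pos (sub_pos.2 hx) α).ne') hs
  unfold lampertiCDF arccot
  fun_prop (disch := first | assumption | exact Or.inr hα)

theorem hasDerivAt_lampertiCDF (hp : p ≠ 0) (hs : sin (π * α) ≠ 0) (hx0 : 0 < x) (hx1 : x < 1) :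
    HasDerivAt (lampertiCDF α p q) (lampertiDensity α p q x) x := by
  have hα : α ≠ 0 := by rintro rfl; simp at hs
  have h1x : 0 < 1 - x := sub_pos.2 hx1
  set u : ℝ → ℝ := fun t => cot (π * α) + q * t ^ α / (p * (1 - t) ^ α * sin (π * α))
  have hu : HasDerivAt u (q / (p * sin (π * α)) *
      (α * x ^ (α - 1) * (1 - x) ^ (α - 1) / ((1 - x) ^ α) ^ 2)) x := by
    have hu_eq : u = fun t => cot (π * α) + q / (p * sin (π * α)) * (t ^ α / (1 - t) ^ α) := by
      funext t
      ring
    rw [hu_eq]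
    exact ((hasDerivAt_rpow_div_one_sub_rpow hx0 hx1).const_mul _).const_add _
  refine ((((hasDerivAt_arccot (u x)).comp x hu).const_mul (1 / (π * α))).const_sub 1).congr_deriv ?_
  rw [lampertiDensity, mul_comm α π, rpow_two_mul hx0.le, rpow_two_mul h1x.le]
  have hY : (1 - x) ^ α ≠ 0 := (rpow_pos_of_pos h1x α).ne'
  have h1u : 1 + u x ^ 2 = (q ^ 2 * (x ^ α) ^ 2 + p ^ 2 * ((1 - x) ^ α) ^ 2
      + 2 * p * q * x ^ α * (1 - x) ^ α * cos (π * α)) / (p * (1 - x) ^ α * sin (π * α)) ^ 2 := by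
    simp only [u, cot_eq_cos_div_sin]
    field_simp
    linear_combination (p * (1 - x) ^ α) ^ 2 * sin_sq_add_cos_sq (π * α)
  rw [h1u]
  field_simp

end Lamperti

theorem stmt_10 (α p q : ℝ) (hα0 : 0 < α) (hα1 : α < 1)
    (hp0 : 0 < p) (hp1 : p < 1) (hq : q = 1 - p)
    (y : ℝ) (hy0 : 0 < y) (hy1 : y < 1) :
    ∫ x in Ioo (0:ℝ) y,
      p * q * Real.sin (α * π) * x ^ (α - 1) * (1 - x) ^ (α - 1) /
        (π * (q ^ 2 * x ^ (2 * α) + p ^ 2 * (1 - x) ^ (2 * α)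
          + 2 * p * q * x ^ α * (1 - x) ^ α * Real.cos (α * π)))
    = 1 - (1 / (π * α)) *
        arccot (Real.cot (π * α) +
          q * y ^ α / (p * (1 - y) ^ α * Real.sin (π * α))) := by
  have hs : 0 < sin (π * α) := sin_pos_of_pos_of_lt_pi (by positivity) (by nlinarith [pi_pos])
  have hq0 : 0 ≤ q := by linarith
  have hcont : ContinuousOn (lampertiCDF α p q) (Icc 0 y) :=
    (continuousOn_lampertiCDF hα0.le hp0.ne' hs.ne').mono fun x hx => hx.2.trans_lt hy1
  have hderiv : ∀ x ∈ Ioo 0 y, HasDerivAt (lampertiCDF α p q) (lampertiDensity α p q x) x :=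
    fun x hx => hasDerivAt_lampertiCDF hp0.ne' hs.ne' hx.1 (hx.2.trans hy1)
  have hnonneg : ∀ x ∈ Ioo 0 y, 0 ≤ lampertiDensity α p q x := fun x hx =>
    lampertiDensity_nonneg hp0.le hq0 (by rw [mul_comm]; exact hs.le) hx.1.le (hx.2.trans hy1).le
  calc ∫ x in Ioo 0 y, lampertiDensity α p q x
      = lampertiCDF α p q y - lampertiCDF α p q 0 :=
        integral_Ioo_eq_sub_of_hasDerivAt_of_nonneg hy0.le hcont hderiv hnonneg
    _ = lampertiCDF α p q y := by rw [lampertiCDF_zero hα0 hα1, sub_zero]
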